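/- arXiv:2206.03446 — 3 statements merged into one kernel-verified Lean document; each statement's English description precedes it below -/
import Mathlib

section
/- Let X ⊆ ℝ^d be a finite set spanning ℝ^d, and let x₁,…,x_d ∈ X be chosen to maximize |det(x₁,…,x_d)| over all d-tuples of elements of X. Then {x₁,…,x_d} is a (1-approximate) barycentric spanner of X: every x ∈ X can be written as a linear combination Σᵢ αᵢ xᵢ with all coefficients αᵢ ∈ [−1, 1]. -/
/-!
Since `X` spans, some `d`-tuple from `X` has nonzero determinant, hence so does the maximizer `x`.
By Cramer's rule the coefficient of `x i` in `v` is `det(x with x i replaced by v) / det x`;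
the numerator is again the determinant of a tuple from `X`, so maximality bounds its absolute
value by that of the denominator.
-/

open Matrix

theorem exists_det_ne_zero_of_span_eq_top {K ι : Type*} [Field K] [Fintype ι] [DecidableEq ι]
    (X : Set (ι → K)) (hX : Submodule.span K X = ⊤) :
    ∃ y : ι → ι → K, (∀ i, y i ∈ X) ∧ (of fun i j => y j i).det ≠ 0 := by
  let b := Module.Basis.ofSpan hX.ge
  let b' := b.reindex (b.indexEquiv (Pi.basisFun K ι))
  refine ⟨b', fun i => Module.Basis.ofSpan_subset hX.ge ⟨_, (b.reindex_apply _ i).symm⟩, ?_⟩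
  -- `(Pi.basisFun K ι).toMatrix b'` is the matrix with columns `b' j`
  exact ((Pi.basisFun K ι).isUnit_det b').ne_zero

theorem eq_sum_det_updateCol_div_det_smul {K n : Type*} [Field K] [Fintype n] [DecidableEq n]
    {A : Matrix n n K} (hA : A.det ≠ 0) (v : n → K) :
    v = ∑ j, ((A.updateCol j v).det / A.det) • Aᵀ j := by
  have hcramer := mulVec_cramer A v
  simp only [mulVec_eq_sum, cramer_apply, op_smul_eq_smul] at hcramer
  simp only [div_eq_inv_mul, mul_smul, ← Finset.smul_sum, hcramer, inv_smul_smul₀ hA]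

theorem updateCol_of_transpose {α n : Type*} [DecidableEq n] (x : n → n → α) (k : n)
    (v : n → α) :
    (of fun i j => x j i).updateCol k v = of fun i j => Function.update x k v j i :=
  updateCol_transpose (M := of x)

/-- A tuple of elements of `X ⊆ ℝ^d` maximizing the absolute determinant is a
`1`-approximate barycentric spanner of `X`. -/
theorem det_maximizer_is_barycentric_spanner {d : ℕ} (X : Finset (Fin d → ℝ))
    (hspan : Submodule.span ℝ (X : Set (Fin d → ℝ)) = ⊤)
    (x : Fin d → (Fin d → ℝ)) (hx : ∀ i, x i ∈ X)
    (hmax : ∀ y : Fin d → (Fin d → ℝ), (∀ i, y i ∈ X) →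
      |Matrix.det (Matrix.of fun i j => y j i)| ≤ |Matrix.det (Matrix.of fun i j => x j i)|) :
    ∀ v ∈ X, ∃ α : Fin d → ℝ, (∀ i, |α i| ≤ 1) ∧ v = ∑ i, α i • x i := by
  set M : Matrix (Fin d) (Fin d) ℝ := of fun i j => x j i
  have hdet : M.det ≠ 0 := by
    obtain ⟨y, hyX, hy⟩ := exists_det_ne_zero_of_span_eq_top _ hspan
    exact abs_pos.mp ((abs_pos.mpr hy).trans_le (hmax y hyX))
  intro v hv
  refine ⟨fun i => (M.updateCol i v).det / M.det, fun i => ?_,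
    eq_sum_det_updateCol_div_det_smul hdet v⟩
  rw [abs_div, div_le_one (abs_pos.mpr hdet), updateCol_of_transpose]
  exact hmax _ (Function.forall_update_iff x (p := fun _ w => w ∈ X) |>.mpr
    ⟨hv, fun j _ => hx j⟩)
end

section
/- Let X ⊆ ℝ^O be a set indexed by a class Π via π ↦ x(π), let M ∈ ℝ^{S×O}, and fix η > 0. Assume that for every x ∈ X, the total negative mass Σ_{s} [(M·x)(s)]₋ ≤ η/(4O²). Suppose x(π¹),…,x(π^O) form a 2-approximate barycentric spanner of X: every x ∈ X equals Σ_{o=1}^O α_o x(π^o) with α_o ∈ [−2,2]. Then for every subset S' ⊆ [S] such that some π ∈ Π satisfies Σ_{s∈S'} ⟨e_s, M·x(π)⟩ ≥ η, the uniform mixture satisfies Σ_{s∈S'} ⟨e_s, M·(x(π¹)+⋯+x(π^O))/O⟩ ≥ η/(4O²). -/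
/-!
Write `T o` for the mass that the spanner element `x(πᵒ)` puts on `S'`, and `ε = η/(4O²)`.
Each `T o ≥ -ε` by the negative-mass bound, and expanding `x(π)` in the spanner gives
`η ≤ ∑ α_o T o ≤ 2 ∑ |T o|`, so some `|T o| ≥ η/(2O) = 2Oε`. Since `T o ≥ -ε > -2Oε`, this
`T o` is positive, and the other `O - 1` terms cost at most `ε` each, so `∑ T o ≥ (O + 1) ε ≥ Oε`.
-/

open Finset

theorem neg_sum_max_neg_le_sum {κ : Type*} [Fintype κ] (v : κ → ℝ) (s : Finset κ) :
    -∑ k, max (-v k) 0 ≤ ∑ k ∈ s, v k :=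
  calc -∑ k, max (-v k) 0
      ≤ -∑ k ∈ s, max (-v k) 0 :=
        neg_le_neg <| sum_le_sum_of_subset_of_nonneg (subset_univ s) fun _ _ _ => le_max_right _ _
    _ = ∑ k ∈ s, -max (-v k) 0 := (sum_neg_distrib _).symm
    _ ≤ ∑ k ∈ s, v k := sum_le_sum fun _ _ => neg_le.mp (le_max_left _ _)

theorem sum_mulVec_sum_smul {m n ι : Type*} [Fintype n] (M : Matrix m n ℝ) (s : Finset m)
    (α : ι → ℝ) (t : Finset ι) (y : ι → n → ℝ) :
    ∑ k ∈ s, M.mulVec (∑ i ∈ t, α i • y i) k = ∑ i ∈ t, α i * ∑ k ∈ s, M.mulVec (y i) k := by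
  simp only [Matrix.mulVec_sum, Matrix.mulVec_smul, Finset.sum_apply, Pi.smul_apply, smul_eq_mul,
    mul_sum]
  exact sum_comm

theorem exists_le_mul_card_mul_abs_of_le_sum_mul {ι : Type*} {s : Finset ι} {α T : ι → ℝ}
    {c η : ℝ} (hη : 0 < η) (hα : ∀ i ∈ s, |α i| ≤ c) (h : η ≤ ∑ i ∈ s, α i * T i) :
    ∃ i ∈ s, η ≤ c * #s * |T i| := by
  have hs : s.Nonempty := nonempty_of_sum_ne_zero (hη.trans_le h).ne'
  refine exists_le_of_sum_le hs ?_
  calc ∑ _i ∈ s, η = #s * η := by rw [sum_const, nsmul_eq_mul]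
    _ ≤ #s * ∑ i ∈ s, c * |T i| := by
        gcongr
        refine h.trans (sum_le_sum fun i hi => ?_)
        calc α i * T i ≤ |α i| * |T i| := abs_mul (α i) (T i) ▸ le_abs_self _
          _ ≤ c * |T i| := by gcongr; exact hα i hi
    _ = ∑ i ∈ s, c * #s * |T i| := by rw [mul_sum]; ring_nf

theorem sub_mul_le_sum_of_forall_neg_le {ι : Type*} [DecidableEq ι] {s : Finset ι}
    {T : ι → ℝ} {ε : ℝ} {j : ι} (hj : j ∈ s) (hT : ∀ i ∈ s, -ε ≤ T i) : T j - (#s - 1) * ε ≤ ∑ i ∈ s, T i := by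
  have hrest : #(s.erase j) • -ε ≤ ∑ i ∈ s.erase j, T i :=
    card_nsmul_le_sum _ _ _ fun i hi => hT i (mem_of_mem_erase hi)
  rw [card_erase_of_mem hj, nsmul_eq_mul, Nat.cast_pred (card_pos.mpr ⟨j, hj⟩)] at hrest
  rw [← add_sum_erase s T hj]
  linarith

theorem le_sum_div_card_of_le_sum_mul {ι : Type*} [Fintype ι] {α T : ι → ℝ} {η : ℝ}
    (hη : 0 < η) (hα : ∀ i, |α i| ≤ 2) (hT : ∀ i, -(η / (4 * Fintype.card ι ^ 2)) ≤ T i)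
    (h : η ≤ ∑ i, α i * T i) :
    η / (4 * Fintype.card ι ^ 2) ≤ (∑ i, T i) / Fintype.card ι := by
  classical
  obtain ⟨j, -, hj⟩ := exists_le_mul_card_mul_abs_of_le_sum_mul hη (fun i _ => hα i) h
  have hsum := sub_mul_le_sum_of_forall_neg_le (mem_univ j) fun i _ => hT i
  rw [card_univ] at hj hsum
  set n : ℝ := (Fintype.card ι : ℝ)
  set ε := η / (4 * n ^ 2)
  have hn : 1 ≤ n := Nat.one_le_cast.mpr (Fintype.card_pos_iff.mpr ⟨j⟩)
  have hε : 0 < ε := by positivity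
  have hηε : η = 4 * n ^ 2 * ε := (mul_div_cancel₀ η (by positivity)).symm
  have hTj_abs : 2 * n * ε ≤ |T j| := by
    rw [hηε] at hj
    nlinarith
  -- otherwise `2 * n * ε ≤ -T j ≤ ε`, impossible as `n ≥ 1`
  have hTj_pos : 2 * n * ε ≤ T j := by
    rcases abs_cases (T j) with ⟨habs, -⟩ | ⟨habs, -⟩ <;> rw [habs] at hTj_abs
    · exact hTj_abs
    · nlinarith [hT j]
  rw [le_div_iff₀ (by positivity)]
  nlinarith

/-- Main barycentric-spanner exploration lemma: if every `M·x(π)` has total negative mass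
at most `η/(4O²)` and `x(π¹),…,x(π^O)` is a 2-approximate barycentric spanner of
`{x(π) : π}`, then for any subset `S'` on which some `π` achieves mass at least `η`,
the uniform mixture of the spanner policies achieves mass at least `η/(4O²)` on `S'`. -/
theorem spanner_mixture_explores {S O : ℕ} (η : ℝ) (hη : 0 < η)
    (M : Matrix (Fin S) (Fin O) ℝ) {Pol : Type*} (x : Pol → (Fin O → ℝ))
    (hneg : ∀ π : Pol, ∑ s, max (-(M.mulVec (x π) s)) 0 ≤ η / (4 * O ^ 2))
    (sp : Fin O → Pol)
    (hspanner : ∀ π : Pol, ∃ α : Fin O → ℝ, (∀ o, |α o| ≤ 2) ∧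
      x π = ∑ o, α o • x (sp o)) :
    ∀ S' : Finset (Fin S), (∃ π : Pol, η ≤ ∑ s ∈ S', M.mulVec (x π) s) →
      η / (4 * O ^ 2) ≤ ∑ s ∈ S', (∑ o, M.mulVec (x (sp o)) s) / O := by
  rintro S' ⟨π, hπ⟩
  obtain ⟨α, hα, hx⟩ := hspanner π
  rw [hx, sum_mulVec_sum_smul] at hπ
  have hT (o : Fin O) :
      -(η / (4 * Fintype.card (Fin O) ^ 2)) ≤ ∑ s ∈ S', M.mulVec (x (sp o)) s := by
    rw [Fintype.card_fin]
    exact (neg_le_neg (hneg (sp o))).trans (neg_sum_max_neg_le_sum _ S')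
  rw [← sum_div, sum_comm]
  simpa only [Fintype.card_fin] using le_sum_div_card_of_le_sum_mul hη hα hT hπ
end

section
/- Let v₁,…,v_O ∈ ℝ^S be vectors each satisfying Σ_s [v_o(s)]₋ ≤ η/(4O²), and suppose some vector v = Σ_o α_o v_o with α_o ∈ [−2,2] satisfies Σ_{s∈S'} v(s) ≥ η for a subset S' ⊆ [S]. Then Σ_{s∈S'} (1/O)·Σ_o v_o(s) ≥ η/(4O²). -/
/-- If each `vₒ` has total negative mass at most `η/(4O²)` and some combination
`∑ₒ αₒ vₒ` with `|αₒ| ≤ 2` places mass at least `η` on `S'`, then the uniform average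
of the `vₒ` places mass at least `η/(4O²)` on `S'`. -/
theorem average_explores {S O : ℕ} (η : ℝ) (hη : 0 < η) (hO : 1 ≤ O)
    (v : Fin O → Fin S → ℝ)
    (hneg : ∀ o, ∑ s, max (-(v o s)) 0 ≤ η / (4 * O ^ 2))
    (S' : Finset (Fin S)) (α : Fin O → ℝ) (hα : ∀ o, |α o| ≤ 2)
    (hbig : η ≤ ∑ s ∈ S', ∑ o, α o * v o s) :
    η / (4 * O ^ 2) ≤ ∑ s ∈ S', (∑ o, v o s) / O := by
  have hOpos : (0:ℝ) < O := by exact_mod_cast hO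
  have hO1 : (1:ℝ) ≤ (O:ℝ) := by exact_mod_cast hO
  set T : Fin O → ℝ := fun o => ∑ s ∈ S', v o s with hT
  -- lower bound on each T o
  have hTlb : ∀ o, -(η / (4 * O ^ 2)) ≤ T o := by
    intro o
    have h1 : ∑ s ∈ S', max (-(v o s)) 0 ≤ ∑ s, max (-(v o s)) 0 :=
      Finset.sum_le_sum_of_subset_of_nonneg (Finset.subset_univ _)
        (fun i _ _ => le_max_right _ _)
    have h2 : -(T o) ≤ ∑ s ∈ S', max (-(v o s)) 0 := by
      rw [hT, ← Finset.sum_neg_distrib]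
      exact Finset.sum_le_sum fun i _ => le_max_left _ _
    linarith [hneg o]
  -- rewrite hbig
  have hbig' : η ≤ ∑ o, α o * T o := by
    rw [Finset.sum_comm] at hbig
    simpa [hT, Finset.mul_sum] using hbig
  -- find o* with α o* * T o* ≥ η / O
  have hne : (Finset.univ : Finset (Fin O)).Nonempty := by
    haveI : Nonempty (Fin O) := Fin.pos_iff_nonempty.mp hO
    exact Finset.univ_nonempty
  obtain ⟨o₀, -, ho₀⟩ := Finset.exists_le_of_sum_le (f := fun _ : Fin O => η / O)
    (g := fun o => α o * T o) hne (by
      have : ∑ _o : Fin O, η / O = η := by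
        rw [Finset.sum_const, Finset.card_univ, Fintype.card_fin, nsmul_eq_mul]
        field_simp
      rw [this]; exact hbig')
  -- T o₀ ≥ η / (2 O)
  have hO2 : (0:ℝ) < 4 * (O:ℝ) ^ 2 := by positivity
  have hTo₀ : η / (2 * O) ≤ T o₀ := by
    by_contra h
    push_neg at h
    have habs := hα o₀
    have hηO : 0 < η / O := div_pos hη hOpos
    rcases le_or_gt (T o₀) 0 with hle | hpos
    · have h1 : α o₀ * T o₀ ≤ 2 * (-(T o₀)) := by
        nlinarith [abs_le.mp habs, hle]
      have h2 : -(T o₀) ≤ η / (4 * O ^ 2) := by linarith [hTlb o₀]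
      have h3 : 2 * (η / (4 * O ^ 2)) < η / O := by
        have hx : 0 < η / (4 * O ^ 2) := div_pos hη hO2
        have heq : η / O = 4 * O * (η / (4 * O ^ 2)) := by field_simp
        rw [heq]; nlinarith
      linarith
    · have h1 : α o₀ * T o₀ ≤ 2 * T o₀ := by
        nlinarith [abs_le.mp habs]
      have h2 : 2 * T o₀ < η / O := by
        have : 2 * T o₀ < 2 * (η / (2 * O)) := by linarith
        calc 2 * T o₀ < 2 * (η / (2 * O)) := this
          _ = η / O := by field_simp
      linarith
  -- sum of all T o
  have hsum : (η / (2 * O)) - (O - 1) * (η / (4 * O ^ 2)) ≤ ∑ o, T o := by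
    have := Finset.add_sum_erase Finset.univ T (Finset.mem_univ o₀)
    rw [← this]
    have hrest : -((O - 1) * (η / (4 * O ^ 2))) ≤ ∑ o ∈ Finset.univ.erase o₀, T o := by
      have hcard : ((Finset.univ.erase o₀).card : ℝ) = (O:ℝ) - 1 := by
        rw [Finset.card_erase_of_mem (Finset.mem_univ o₀), Finset.card_univ,
          Fintype.card_fin]
        have : 1 ≤ O := hO
        push_cast [Nat.cast_sub this]
        ring_nf
      calc -((O - 1) * (η / (4 * O ^ 2)))
          = ∑ _o ∈ Finset.univ.erase o₀, -(η / (4 * O ^ 2)) := by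
            rw [Finset.sum_const, nsmul_eq_mul, hcard]; ring
        _ ≤ ∑ o ∈ Finset.univ.erase o₀, T o :=
            Finset.sum_le_sum fun i _ => hTlb i
    linarith
  -- finish
  have hgoal : ∑ s ∈ S', (∑ o, v o s) / O = (∑ o, T o) / O := by
    rw [← Finset.sum_div, Finset.sum_comm]
  rw [hgoal]
  rw [le_div_iff₀ hOpos]
  have key : η / (4 * O ^ 2) * O ≤ (η / (2 * O)) - (O - 1) * (η / (4 * O ^ 2)) := by
    have h1 : η / (4 * O ^ 2) * O + (O - 1) * (η / (4 * O ^ 2)) =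
        (2 * O - 1) * (η / (4 * O ^ 2)) := by ring
    have h2 : (2 * O - 1) * (η / (4 * O ^ 2)) ≤ 2 * O * (η / (4 * O ^ 2)) := by
      have : (0:ℝ) < η / (4 * O ^ 2) := div_pos hη hO2
      nlinarith
    have h3 : 2 * (O:ℝ) * (η / (4 * O ^ 2)) = η / (2 * O) := by
      field_simp; ring
    linarith
  linarith
end
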